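/- arXiv:1910.12402 — 3 statements merged into one kernel-verified Lean document; each statement's English description precedes it below -/
import Mathlib

section
/- For all u, v in Λ³(ℂ⁹), the transpose of the endomorphism u × v equals v × u: (u × v)ᵀ = v × u. -/
open scoped BigOperators
open Matrix

noncomputable section

/-- Index type for a basis of `Λᵏ(ℂ⁹)`: subsets of `Fin 9` of cardinality `k`. -/
abbrev Idx (k : ℕ) : Type := {s : Finset (Fin 9) // s.card = k}

/-- `Λᵏ(ℂ⁹)` in coordinates with respect to the basis `e_{i₁} ∧ ⋯ ∧ e_{i_k}`, `i₁ < ⋯ < i_k`. -/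
abbrev Lam (k : ℕ) : Type := Idx k → ℂ

/-- Sign obtained when sorting the increasing enumeration of `s` followed by that of `t`. -/
def sgn (s t : Finset (Fin 9)) : ℂ :=
  (-1 : ℂ) ^ (∑ i ∈ s, (t.filter (fun j => j < i)).card)

/-- Wedge product `Λᵏ × Λˡ → Λ^{k+l}`. -/
def wedge {k l : ℕ} (u : Lam k) (v : Lam l) : Lam (k + l) := fun w =>
  ∑ s ∈ (w.1.powerset.filter fun s => s.card = k).attach,
    sgn s.1 (w.1 \ s.1) *
      u ⟨s.1, by
        have hs := s.2
        simp only [Finset.mem_filter] at hs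
        exact hs.2⟩ *
      v ⟨w.1 \ s.1, by
        have hs := s.2
        simp only [Finset.mem_filter, Finset.mem_powerset] at hs
        rw [Finset.card_sdiff, Finset.inter_eq_left.mpr hs.1, w.2, hs.2]
        omega⟩

/-- The Hodge star operator `Λᵏ → Λˡ`, `k + l = 9`, characterized by
`(⋆u, v) = (u ∧ v, e₁ ∧ ⋯ ∧ e₉)`. -/
def hstar {k l : ℕ} (h : k + l = 9) (u : Lam k) : Lam l := fun t =>
  sgn t.1ᶜ t.1 *
    u ⟨t.1ᶜ, by
      rw [Finset.card_compl, t.2]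
      simp only [Fintype.card_fin]
      omega⟩

def star3 : Lam 3 → Lam 6 := hstar (by norm_num)
def star4 : Lam 4 → Lam 5 := hstar (by norm_num)
def star6 : Lam 6 → Lam 3 := hstar (by norm_num)
def star8 : Lam 8 → Lam 1 := hstar (by norm_num)

/-- The bilinear form on `Λᵏ(ℂ⁹)` induced by the standard bilinear form of `ℂ⁹`
(the Gram determinant form); the chosen basis is orthonormal for it. -/
def ip {k : ℕ} (u v : Lam k) : ℂ := ∑ s, u s * v s

/-- The standard bilinear form on `ℂ⁹`. -/
def ip9 (x y : Fin 9 → ℂ) : ℂ := ∑ i, x i * y i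

/-- A vector of `ℂ⁹` viewed as an element of `Λ¹(ℂ⁹)`. -/
def vec (x : Fin 9 → ℂ) : Lam 1 := fun s => ∑ i ∈ s.1, x i

/-- An element of `Λ¹(ℂ⁹)` viewed as a vector of `ℂ⁹`. -/
def unvec (u : Lam 1) : Fin 9 → ℂ := fun i => u ⟨{i}, Finset.card_singleton i⟩

/-- The `k × k` minor of `A` with rows `s` and columns `t` (in increasing order). -/
def minor {k : ℕ} (A : Matrix (Fin 9) (Fin 9) ℂ) (s t : Idx k) : ℂ :=
  Matrix.det (Matrix.of fun i j : Fin k =>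
    A (s.1.orderIsoOfFin s.2 i) (t.1.orderIsoOfFin t.2 j))

/-- The natural action of a matrix `A` on `Λᵏ(ℂ⁹)`:
`A(u₁ ∧ ⋯ ∧ u_k) = Au₁ ∧ ⋯ ∧ Au_k`, in coordinates given by minors (Cauchy–Binet). -/
def act {k : ℕ} (A : Matrix (Fin 9) (Fin 9) ℂ) (u : Lam k) : Lam k := fun s =>
  ∑ t, minor A s t * u t

/-- Coordinate matrix of the derivation action of `D` on `Λᵏ(ℂ⁹)`
(the differential of `act` at the identity). -/
def dminor {k : ℕ} (D : Matrix (Fin 9) (Fin 9) ℂ) (s t : Idx k) : ℂ :=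
  ∑ m : Fin k, Matrix.det (Matrix.of fun i j : Fin k =>
    if i = m then D (s.1.orderIsoOfFin s.2 i) (t.1.orderIsoOfFin t.2 j)
    else if (s.1.orderIsoOfFin s.2 i : Fin 9) = (t.1.orderIsoOfFin t.2 j : Fin 9) then 1 else 0)

/-- The derivation action of `D` on `Λᵏ(ℂ⁹)`:
`D(u₁ ∧ u₂ ∧ u₃) = Du₁ ∧ u₂ ∧ u₃ + u₁ ∧ Du₂ ∧ u₃ + u₁ ∧ u₂ ∧ Du₃`. -/
def der {k : ℕ} (D : Matrix (Fin 9) (Fin 9) ℂ) (u : Lam k) : Lam k := fun s =>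
  ∑ t, dminor D s t * u t

/-- The endomorphism `u × v` of `ℂ⁹`: `(u × v)x = ⋆(v ∧ ⋆(u ∧ x)) + (2/3)(u,v)x`. -/
def crossApp (u v : Lam 3) (x : Fin 9 → ℂ) : Fin 9 → ℂ := fun i =>
  unvec (star8 (wedge v (star4 (wedge u (vec x))))) i + (2 / 3 : ℂ) * ip u v * x i

/-- The matrix of the endomorphism `u × v` of `ℂ⁹`. -/
def crossMat (u v : Lam 3) : Matrix (Fin 9) (Fin 9) ℂ :=
  Matrix.of fun i j => crossApp u v (fun l => if l = j then 1 else 0) i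

/-!
Pairing with the basis vector `e_j`, the Hodge stars in `⋆(v ∧ ⋆Y)` cancel up to a sign:
`(e_j, ⋆(v ∧ ⋆Y)) = -(Y, v ∧ e_j)` for `v ∈ Λ³`, `Y ∈ Λ⁴`. Hence the `(j, i)` entry of `u × v`
is `-(u ∧ e_i, v ∧ e_j) + (2/3)(u, v) δᵢⱼ`, which is visibly unchanged by swapping `(u, i)` with
`(v, j)`. In coordinates the sign identity comes from additivity of the inversion count behind
`sgn` over disjoint unions, together with `sgn c {j} * sgn {j} c = (-1)^|c|` for `j ∉ c`; here
`c` is the complement of `s ∪ {j}` for the index `s` of `v_s`, so `|c| = 5` is odd.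
-/

open Finset

lemma sgn_union_left {s s' : Finset (Fin 9)} (t : Finset (Fin 9)) (h : Disjoint s s') :
    sgn (s ∪ s') t = sgn s t * sgn s' t := by
  rw [sgn, sgn, sgn, sum_union h, pow_add]

lemma sgn_mul_sgn_swap {s t : Finset (Fin 9)} (h : Disjoint s t) :
    sgn s t * sgn t s = (-1) ^ (#s * #t) := by
  rw [sgn, sgn, ← pow_add]
  congr 1
  simp only [card_filter]
  rw [sum_comm (s := t), ← sum_add_distrib, card_eq_sum_ones s, sum_mul, one_mul,
    card_eq_sum_ones t]
  refine sum_congr rfl fun x hx => ?_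
  rw [← sum_add_distrib]
  refine sum_congr rfl fun y hy => ?_
  have hxy : x ≠ y := fun hxy => disjoint_left.mp h hx (hxy ▸ hy)
  rcases hxy.lt_or_gt with hlt | hlt <;> simp [hlt, hlt.not_gt]

lemma sgn_mul_self (s t : Finset (Fin 9)) : sgn s t * sgn s t = 1 := by
  rw [sgn, ← pow_add, ← two_mul, pow_mul, neg_one_sq, one_pow]

/-- The sign collected by the term `v_s` of the `e_j`-coefficient of `⋆(v ∧ ⋆Y)`. -/
lemma sgn_compl_singleton_sdiff {j : Fin 9} {s : Finset (Fin 9)} (hs : j ∉ s) :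
    sgn {j}ᶜ {j} * sgn s ({j}ᶜ \ s) * sgn ({j} ∪ s) ({j}ᶜ \ s)
      = (-1) ^ #({j}ᶜ \ s) * sgn s {j} := by
  have hswap := sgn_mul_sgn_swap (s := {j}ᶜ \ s) (t := {j}) (by simp)
  rw [card_singleton, mul_one] at hswap
  nth_rw 1 [← union_sdiff_of_subset (show s ⊆ {j}ᶜ by simpa using hs)]
  rw [sgn_union_left _ disjoint_sdiff, sgn_union_left _ (disjoint_singleton_left.mpr hs), ← hswap]
  linear_combination
    (sgn s {j} * sgn ({j}ᶜ \ s) {j} * sgn {j} ({j}ᶜ \ s)) * sgn_mul_self s ({j}ᶜ \ s)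

/-- Indexes coordinates by bare finsets, so that no cardinality proofs have to be transported. -/
def coeff {k : ℕ} (w : Lam k) (a : Finset (Fin 9)) : ℂ :=
  if h : #a = k then w ⟨a, h⟩ else 0

lemma coeff_of_card_eq {k : ℕ} (w : Lam k) {a : Finset (Fin 9)} (h : #a = k) :
    coeff w a = w ⟨a, h⟩ :=
  dif_pos h

lemma ip_eq_sum_coeff {k : ℕ} (u v : Lam k) :
    ip u v = ∑ a ∈ powersetCard k univ, coeff u a * coeff v a := by
  rw [ip, sum_subtype (M := ℂ) (powersetCard k univ) (p := fun a => #a = k) (by simp)]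
  exact sum_congr rfl fun a _ => by rw [coeff_of_card_eq _ a.2, coeff_of_card_eq _ a.2]

lemma coeff_wedge {k l : ℕ} (u : Lam k) (v : Lam l) {a : Finset (Fin 9)} (ha : #a = k + l) :
    coeff (wedge u v) a
      = ∑ s ∈ powersetCard k a, sgn s (a \ s) * coeff u s * coeff v (a \ s) := by
  rw [coeff_of_card_eq _ ha, wedge, powersetCard_eq_filter,
    ← sum_attach _ fun s => sgn s (a \ s) * coeff u s * coeff v (a \ s)]
  refine sum_congr rfl fun s _ => ?_
  rw [coeff_of_card_eq, coeff_of_card_eq]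

lemma coeff_hstar {k l : ℕ} (h : k + l = 9) (u : Lam k) {a : Finset (Fin 9)} (ha : #a = l) :
    coeff (hstar h u) a = sgn aᶜ a * coeff u aᶜ := by
  rw [coeff_of_card_eq _ ha, hstar, coeff_of_card_eq]

lemma coeff_vec_single (i : Fin 9) {a : Finset (Fin 9)} (ha : #a = 1) :
    coeff (vec fun l => if l = i then 1 else 0) a = if i ∈ a then 1 else 0 := by
  rw [coeff_of_card_eq _ ha]
  exact sum_ite_eq' a i fun _ => 1

lemma coeff_wedge_vec_single {k : ℕ} (v : Lam k) (j : Fin 9) {a : Finset (Fin 9)}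
    (ha : #a = k + 1) :
    coeff (wedge v (vec fun l => if l = j then 1 else 0)) a
      = if j ∈ a then sgn (a.erase j) {j} * coeff v (a.erase j) else 0 := by
  rw [coeff_wedge _ _ ha]
  split_ifs with hj
  · rw [sum_eq_single_of_mem (a.erase j) (by simp [card_erase_of_mem hj, ha, erase_subset]),
      sdiff_erase_self hj, coeff_vec_single _ (card_singleton j), if_pos (mem_singleton_self j),
      mul_one]
    intro s hs hne
    obtain ⟨hsa, hsk⟩ := mem_powersetCard.mp hs
    have hcard : #(a \ s) = 1 := by rw [card_sdiff_of_subset hsa, ha, hsk]; omega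
    rw [coeff_vec_single _ hcard, if_neg, mul_zero]
    intro hjs
    obtain ⟨m, hm⟩ := card_eq_one.mp hcard
    rw [hm, mem_singleton] at hjs
    subst hjs
    exact hne (by rw [← Finset.sdiff_sdiff_eq_self hsa, hm, erase_eq])
  · refine sum_eq_zero fun s hs => ?_
    have hcard : #(a \ s) = 1 := by
      rw [card_sdiff_of_subset (mem_powersetCard.mp hs).1, ha, (mem_powersetCard.mp hs).2]; omega
    rw [coeff_vec_single _ hcard, if_neg fun h => hj (mem_sdiff.mp h).1, mul_zero]

lemma unvec_star8_wedge_star4_eq_sum (v : Lam 3) (Y : Lam 4) (j : Fin 9) :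
    unvec (star8 (wedge v (star4 Y))) j
      = ∑ s ∈ powersetCard 3 {j}ᶜ, -(sgn s {j} * coeff v s * coeff Y (insert j s)) := by
  rw [unvec, ← coeff_of_card_eq (star8 _) (card_singleton j), star8,
    coeff_hstar _ _ (card_singleton j), coeff_wedge _ _ (by rw [card_compl, card_singleton]; rfl),
    mul_sum]
  refine sum_congr rfl fun s hs => ?_
  obtain ⟨hsj, hs3⟩ := mem_powersetCard.mp hs
  have hj : j ∉ s := fun h => by simpa using hsj h
  have hc : #({j}ᶜ \ s) = 5 := by
    rw [card_sdiff_of_subset hsj, hs3, card_compl, card_singleton]; rfl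
  have hcc : ({j}ᶜ \ s)ᶜ = insert j s := by ext; simp; tauto
  have hsign := sgn_compl_singleton_sdiff hj
  rw [hc, ← insert_eq] at hsign
  rw [star4, coeff_hstar _ _ hc, hcc]
  linear_combination (coeff v s * coeff Y (insert j s)) * hsign

lemma ip_wedge_vec_single {k : ℕ} (Y : Lam (k + 1)) (v : Lam k) (j : Fin 9) :
    ip Y (wedge v (vec fun l => if l = j then 1 else 0))
      = ∑ a ∈ (powersetCard (k + 1) univ).filter (j ∈ ·),
          coeff Y a * (sgn (a.erase j) {j} * coeff v (a.erase j)) := by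
  rw [ip_eq_sum_coeff, sum_filter]
  refine sum_congr rfl fun a ha => ?_
  rw [coeff_wedge_vec_single _ _ (mem_powersetCard.mp ha).2]
  split_ifs <;> simp

lemma unvec_star8_wedge_star4 (v : Lam 3) (Y : Lam 4) (j : Fin 9) :
    unvec (star8 (wedge v (star4 Y))) j
      = -ip Y (wedge v (vec fun l => if l = j then 1 else 0)) := by
  rw [unvec_star8_wedge_star4_eq_sum, ip_wedge_vec_single (k := 3), ← sum_neg_distrib]
  have hj : ∀ s ∈ powersetCard 3 {j}ᶜ, j ∉ s := fun s hs h => by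
    simpa using (mem_powersetCard.mp hs).1 h
  refine sum_nbij' (insert j) (fun a => a.erase j) ?_ ?_ ?_ ?_ ?_
  · intro s hs
    simp [card_insert_of_notMem (hj s hs), (mem_powersetCard.mp hs).2]
  · intro a ha
    obtain ⟨ha4, hja⟩ := mem_filter.mp ha
    simp [card_erase_of_mem hja, (mem_powersetCard.mp ha4).2]
  · exact fun s hs => erase_insert (hj s hs)
  · exact fun a ha => insert_erase (mem_filter.mp ha).2
  · intro s hs
    rw [erase_insert (hj s hs)]
    ring

lemma ip_comm {k : ℕ} (u v : Lam k) : ip u v = ip v u :=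
  sum_congr rfl fun _ _ => mul_comm _ _

/-- `(u × v)ᵀ = v × u`. -/
theorem stmt7 (u v : Lam 3) : (crossMat u v)ᵀ = crossMat v u := by
  ext i j
  simp only [transpose_apply, crossMat, of_apply, crossApp, unvec_star8_wedge_star4]
  rw [ip_comm u v, ip_comm (wedge u _)]
  simp only [eq_comm]

end
end

section
/- The Lie algebra g = sl(9,ℂ) ⊕ Λ³(ℂ⁹) ⊕ Λ³(ℂ⁹) with the bracket [(D₁,u₁,v₁),(D₂,u₂,v₂)] = ([D₁,D₂] + u₁×v₂ − u₂×v₁, D₁u₂ − D₂u₁ + *(v₁∧v₂), −D₁ᵀv₂ + D₂ᵀv₁ − *(u₁∧u₂)) is simple: every nonzero ideal of g equals g. -/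
open scoped BigOperators
open Matrix

noncomputable section

/-- The ambient product space containing `g = sl(9,ℂ) ⊕ Λ³(ℂ⁹) ⊕ Λ³(ℂ⁹)`. -/
abbrev P : Type := Matrix (Fin 9) (Fin 9) ℂ × Lam 3 × Lam 3

/-- The subspace `g = sl(9,ℂ) ⊕ Λ³(ℂ⁹) ⊕ Λ³(ℂ⁹)` (traceless first component). -/
def g0 : Submodule ℂ P :=
  LinearMap.ker ((Matrix.traceLinearMap (Fin 9) ℂ ℂ).comp
    (LinearMap.fst ℂ (Matrix (Fin 9) (Fin 9) ℂ) (Lam 3 × Lam 3)))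

/-- The bracket `[(D₁,u₁,v₁),(D₂,u₂,v₂)] = ([D₁,D₂] + u₁×v₂ − u₂×v₁,
D₁u₂ − D₂u₁ + ⋆(v₁∧v₂), −D₁ᵀv₂ + D₂ᵀv₁ − ⋆(u₁∧u₂))`. -/
def ebr (R S : P) : P :=
  (R.1 * S.1 - S.1 * R.1 + crossMat R.2.1 S.2.2 - crossMat S.2.1 R.2.2,
   der R.1 S.2.1 - der S.1 R.2.1 + star6 (wedge R.2.2 S.2.2),
   - der R.1ᵀ S.2.2 + der S.1ᵀ R.2.2 - star6 (wedge R.2.1 S.2.1))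

/-!
Let `H = diag(t₁, …, t₉)` with `tᵢ = 9·2ⁱ - 511`, a traceless matrix, so `ad H` preserves every
ideal `I`. It acts diagonally on the standard basis of `g`, with eigenvalue `tᵢ - tⱼ` on `E_ij`,
`s_S = ∑_{i ∈ S} tᵢ` on `e_S` in the first copy of `Λ³` and `-s_S` on `e_S` in the second, and
these eigenvalues are pairwise distinct apart from the zero eigenspace of diagonal matrices.
Lagrange interpolation polynomials in `ad H` thus project a nonzero element of `I` onto a single
`E_ab` or `e_S`, or leave a nonzero diagonal matrix, whose bracket with a suitable `E_ab` is a
multiple of `E_ab`. A basis vector `e_S` leads back to `sl(9)`: its bracket with `e_S` in the other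
copy is `±(e_S × e_S) ≠ 0`. From one `E_ab`, commutators give every `E_kl` and `E_ii - E_jj`, and
bracketing `e_S` with `E_aa - E_bb` for `a ∈ S`, `b ∉ S` returns `±e_S`; these span `g`.
-/

open Polynomial

section Interpolation

variable {K V : Type*} [Field K] [AddCommGroup V] [Module K V] (f : Module.End K V)

lemma Module.End.aeval_apply_mem {p : Submodule K V} (hp : ∀ x ∈ p, f x ∈ p) (q : K[X]) :
    ∀ x ∈ p, aeval f q x ∈ p := by
  induction q using Polynomial.induction_on with
  | C a => intro x hx; simpa using p.smul_mem a hx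
  | add q r hq hr => intro x hx; simpa using add_mem (hq x hx) (hr x hx)
  | monomial n a h =>
    intro x hx
    simpa [pow_succ, ← mul_assoc] using h (f x) (hp x hx)

lemma Module.End.map_aeval_apply (φ : V →ₗ[K] K) {w : K} (hφ : ∀ y, φ (f y) = w * φ y)
    (q : K[X]) (y : V) : φ (aeval f q y) = q.eval w * φ y := by
  induction q using Polynomial.induction_on generalizing y with
  | C a => simp
  | add q r hq hr => simp [hq, hr, add_mul]
  | monomial n a h =>
    rw [pow_succ, ← mul_assoc, map_mul, aeval_X, Module.End.mul_apply, h, hφ, eval_mul_X]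
    ring

lemma Module.End.map_aeval_lagrangeBasis_apply [DecidableEq K] (φ : V →ₗ[K] K) {w : K}
    (hφ : ∀ y, φ (f y) = w * φ y) {W : Finset K} (hw : w ∈ W) (μ : K) (y : V) :
    φ (aeval f (Lagrange.basis W id μ) y) = if w = μ then φ y else 0 := by
  rw [f.map_aeval_apply φ hφ]
  split_ifs with h
  · subst h
    simpa using congrArg (· * φ y) (Lagrange.eval_basis_self (Set.injOn_id _) hw)
  · simpa using congrArg (· * φ y) (Lagrange.eval_basis_of_ne (v := id) (Ne.symm h) hw)

end Interpolation

lemma Matrix.mem_of_trace_eq_zero {n R : Type*} [Fintype n] [DecidableEq n] [CommRing R]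
    {J : Submodule R (Matrix n n R)} (hE : ∀ i j, i ≠ j → Matrix.single i j 1 ∈ J)
    (hH : ∀ i j, Matrix.single i i 1 - Matrix.single j j 1 ∈ J) {A : Matrix n n R}
    (hA : A.trace = 0) : A ∈ J := by
  cases isEmpty_or_nonempty n
  · simp [Subsingleton.elim A 0]
  obtain ⟨i₀⟩ := ‹Nonempty n›
  have hsum : A = ∑ i, ∑ j,
      (Matrix.single i j (A i j) - if i = j then A i i • Matrix.single i₀ i₀ 1 else 0) := by
    have htr : ∑ i, A i i = 0 := hA
    simp only [Finset.sum_sub_distrib, Finset.sum_ite_eq, Finset.mem_univ, if_true,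
      ← Finset.sum_smul, htr, zero_smul, sub_zero]
    exact Matrix.matrix_eq_sum_single A
  rw [hsum]
  refine Submodule.sum_mem _ fun i _ => Submodule.sum_mem _ fun j _ => ?_
  by_cases hij : i = j
  · subst hij
    simpa [smul_sub, Matrix.smul_single] using J.smul_mem (A i i) (hH i i₀)
  · simpa [hij, Matrix.smul_single] using J.smul_mem (A i j) (hE i j hij)

lemma Submodule.mem_of_forall_single_mem {ι R : Type*} [Fintype ι] [DecidableEq ι] [Semiring R]
    {J : Submodule R (ι → R)} (h : ∀ i, Pi.single i 1 ∈ J) (x : ι → R) : x ∈ J := by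
  rw [← Finset.univ_sum_single x]
  exact J.sum_mem fun i _ => by simpa [← Pi.single_smul'] using J.smul_mem (x i) (h i)

@[simp] lemma hstar_zero {k l : ℕ} (h : k + l = 9) : hstar h (0 : Lam k) = 0 := by
  funext t; simp [hstar]

@[simp] lemma wedge_zero_left {k l : ℕ} (v : Lam l) : wedge (0 : Lam k) v = 0 := by
  funext w; simp [wedge]

@[simp] lemma wedge_zero_right {k l : ℕ} (u : Lam k) : wedge u (0 : Lam l) = 0 := by
  funext w; simp [wedge]

@[simp] lemma unvec_zero : unvec 0 = 0 := rfl

@[simp] lemma crossMat_zero_left (v : Lam 3) : crossMat 0 v = 0 := by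
  ext i j; simp [crossMat, crossApp, ip, star4, star8]

@[simp] lemma crossMat_zero_right (u : Lam 3) : crossMat u 0 = 0 := by
  ext i j; simp [crossMat, crossApp, ip, star8]

@[simp] lemma der_zero_left {k : ℕ} (u : Lam k) : der (0 : Matrix (Fin 9) (Fin 9) ℂ) u = 0 := by
  funext s
  refine Finset.sum_eq_zero fun t _ => ?_
  rw [dminor, Finset.sum_eq_zero fun m _ => Matrix.det_eq_zero_of_row_eq_zero m fun j => by simp,
    zero_mul]

@[simp] lemma der_zero_right {k : ℕ} (D : Matrix (Fin 9) (Fin 9) ℂ) : der D (0 : Lam k) = 0 := by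
  funext s; simp [der]

lemma det_of_orderIsoOfFin_eq {k : ℕ} (s t : Idx k) :
    (Matrix.of fun i j : Fin k =>
      if (s.1.orderIsoOfFin s.2 i : Fin 9) = t.1.orderIsoOfFin t.2 j then (1 : ℂ) else 0).det =
      if s = t then 1 else 0 := by
  split_ifs with hst
  · subst hst
    convert Matrix.det_one (R := ℂ) (n := Fin k) using 2
    ext i j
    simp [Matrix.one_apply]
  · obtain ⟨x, hxs, hxt⟩ := Finset.not_subset.mp fun h =>
      hst (Subtype.ext (Finset.eq_of_subset_of_card_le h (by rw [s.2, t.2])))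
    refine Matrix.det_eq_zero_of_row_eq_zero ((s.1.orderIsoOfFin s.2).symm ⟨x, hxs⟩) fun j => ?_
    simp only [Matrix.of_apply, OrderIso.apply_symm_apply]
    exact if_neg fun h => hxt (by rw [h]; exact (t.1.orderIsoOfFin t.2 j).2)

lemma dminor_diagonal {k : ℕ} (c : Fin 9 → ℂ) (s t : Idx k) :
    dminor (Matrix.diagonal c) s t = if s = t then ∑ i ∈ s.1, c i else 0 := by
  set N : Matrix (Fin k) (Fin k) ℂ := Matrix.of fun i j =>
    if (s.1.orderIsoOfFin s.2 i : Fin 9) = t.1.orderIsoOfFin t.2 j then 1 else 0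
  have hrow : ∀ m : Fin k, (Matrix.of fun i j : Fin k =>
      if i = m then Matrix.diagonal c (s.1.orderIsoOfFin s.2 i) (t.1.orderIsoOfFin t.2 j)
      else if (s.1.orderIsoOfFin s.2 i : Fin 9) = t.1.orderIsoOfFin t.2 j then 1 else 0) =
      N.updateRow m (c (s.1.orderIsoOfFin s.2 m) • N m) := by
    intro m
    ext i j
    by_cases him : i = m
    · subst him
      simp only [N, Matrix.of_apply, if_pos, Matrix.updateRow_self, Matrix.diagonal_apply,
        Pi.smul_apply, smul_eq_mul]
      split_ifs with h <;> simp [h]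
    · simp [N, him]
  have hsum : ∑ m : Fin k, c (s.1.orderIsoOfFin s.2 m) = ∑ i ∈ s.1, c i :=
    (Finset.sum_coe_sort s.1 c ▸ Fintype.sum_equiv (s.1.orderIsoOfFin s.2).toEquiv _ _ fun _ => rfl)
  simp only [dminor, hrow, Matrix.det_updateRow_smul, Matrix.updateRow_eq_self, ← Finset.sum_mul,
    hsum, N, det_of_orderIsoOfFin_eq]
  split_ifs <;> simp

lemma der_diagonal {k : ℕ} (c : Fin 9 → ℂ) (u : Lam k) (s : Idx k) :
    der (Matrix.diagonal c) u s = (∑ i ∈ s.1, c i) * u s := by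
  simp [der, dminor_diagonal]

lemma der_single_sub_single {S : Idx 3} {a b : Fin 9} (ha : a ∈ S.1) (hb : b ∉ S.1) :
    der (Matrix.single a a 1 - Matrix.single b b 1) (Pi.single S 1) = Pi.single S 1 := by
  funext T
  rw [← Matrix.diagonal_single, ← Matrix.diagonal_single, Matrix.diagonal_sub, der_diagonal]
  by_cases hT : T = S
  · subst hT; simp [Finset.sum_sub_distrib, Pi.single_apply, ha, hb]
  · simp [hT]

lemma wedge_single_vec_eq_zero {k : ℕ} (S : Idx k) (c : ℂ) {x : Fin 9 → ℂ}
    (hx : ∀ i ∉ S.1, x i = 0) : wedge (Pi.single S c) (vec x) = 0 := by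
  funext w
  refine Finset.sum_eq_zero fun s _ => ?_
  by_cases hs : s.1 = S.1
  · have hvec : ∀ i ∈ w.1 \ s.1, x i = 0 := fun i hi => hx i (hs ▸ (Finset.mem_sdiff.mp hi).2)
    exact mul_eq_zero_of_right _ (Finset.sum_eq_zero hvec)
  · have hS : (⟨s.1, (Finset.mem_filter.mp s.2).2⟩ : Idx k) ≠ S := fun h => hs (congrArg (·.1) h)
    simp [hS]

lemma exists_mem_notMem (S : Idx 3) : ∃ a b : Fin 9, a ∈ S.1 ∧ b ∉ S.1 := by
  obtain ⟨a, ha⟩ : S.1.Nonempty := Finset.card_pos.mp (by rw [S.2]; norm_num)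
  obtain ⟨b, hb⟩ : S.1ᶜ.Nonempty := Finset.card_pos.mp (by rw [Finset.card_compl, S.2]; norm_num)
  exact ⟨a, b, ha, Finset.mem_compl.mp hb⟩

lemma crossMat_single_self_apply_of_mem (S : Idx 3) {a : Fin 9} (ha : a ∈ S.1) :
    crossMat (Pi.single S 1) (Pi.single S 1) a a = 2 / 3 := by
  have hwedge : wedge (Pi.single S 1) (vec fun l => if l = a then 1 else 0) = 0 :=
    wedge_single_vec_eq_zero S 1 fun i hi => if_neg (ne_of_mem_of_not_mem ha hi).symm
  simp [crossMat, crossApp, hwedge, star4, star8, ip, Pi.single_apply]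

lemma crossMat_single_self_ne_zero (S : Idx 3) : crossMat (Pi.single S 1) (Pi.single S 1) ≠ 0 := by
  obtain ⟨a, -, ha, -⟩ := exists_mem_notMem S
  intro h
  have h23 := crossMat_single_self_apply_of_mem S ha
  norm_num [h] at h23

lemma P.ext {Y Z : P} (h₁ : ∀ i j, Y.1 i j = Z.1 i j) (h₂ : ∀ S, Y.2.1 S = Z.2.1 S)
    (h₃ : ∀ S, Y.2.2 S = Z.2.2 S) : Y = Z :=
  Prod.ext (Matrix.ext h₁) (Prod.ext (funext h₂) (funext h₃))

lemma single_mem_g0 {i j : Fin 9} (hij : i ≠ j) : ((Matrix.single i j 1, 0, 0) : P) ∈ g0 := by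
  simp [g0, Matrix.trace_single_eq_of_ne _ _ _ hij]

lemma inr_mem_g0 (u v : Lam 3) : ((0, u, v) : P) ∈ g0 := by
  simp [g0]

lemma ebr_inl_left (D : Matrix (Fin 9) (Fin 9) ℂ) (Y : P) :
    ebr (D, 0, 0) Y = (D * Y.1 - Y.1 * D, der D Y.2.1, -der Dᵀ Y.2.2) := by
  simp [ebr, star6]

lemma ebr_inl_inl (A B : Matrix (Fin 9) (Fin 9) ℂ) :
    ebr (A, 0, 0) (B, 0, 0) = (A * B - B * A, 0, 0) := by
  simp [ebr_inl_left]

lemma ebr_inr_fst_inl (u : Lam 3) (B : Matrix (Fin 9) (Fin 9) ℂ) :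
    ebr (0, u, 0) (B, 0, 0) = (0, -der B u, 0) := by
  simp [ebr, star6]

lemma ebr_inr_snd_inl (v : Lam 3) (B : Matrix (Fin 9) (Fin 9) ℂ) :
    ebr (0, 0, v) (B, 0, 0) = (0, 0, der Bᵀ v) := by
  simp [ebr, star6]

lemma ebr_inr_fst_inr_snd (u v : Lam 3) :
    ebr (0, u, 0) (0, 0, v) = (crossMat u v, 0, 0) := by
  simp [ebr, star6]

lemma ebr_inr_snd_inr_fst (u v : Lam 3) :
    ebr (0, 0, v) (0, u, 0) = (-crossMat u v, 0, 0) := by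
  simp [ebr, star6]

/-- `9·2ⁱ` makes the differences `tᵢ - tⱼ` distinct and `511 = ∑ 2ⁱ` makes `∑ tᵢ = 0`; as `3 ∤ 511`,
no `s_S = 9·∑_{i ∈ S} 2ⁱ - 3·511` is `±(tᵢ - tⱼ)` or `-s_T`. -/
def regularWeight (i : Fin 9) : ℤ := 9 * 2 ^ (i : ℕ) - 511

def rootWeight (i j : Fin 9) : ℤ := regularWeight i - regularWeight j

def setWeight (S : Idx 3) : ℤ := ∑ i ∈ S.1, regularWeight i

lemma sum_regularWeight : ∑ i, regularWeight i = 0 := by decide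

lemma rootWeight_eq_iff {i j : Fin 9} (hij : i ≠ j) (k l : Fin 9) :
    (rootWeight k l : ℂ) = rootWeight i j ↔ k = i ∧ l = j := by
  rw [Int.cast_inj]
  revert i j k l
  unfold rootWeight regularWeight
  decide

lemma setWeight_eq (S : Idx 3) : setWeight S = 9 * ∑ i ∈ S.1, (2 : ℤ) ^ (i : ℕ) - 1533 := by
  unfold setWeight regularWeight
  rw [Finset.sum_sub_distrib, ← Finset.mul_sum, Finset.sum_const, S.2]
  norm_num

lemma setWeight_ne_rootWeight (S : Idx 3) (i j : Fin 9) :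
    (setWeight S : ℂ) ≠ rootWeight i j := by
  rw [Ne, Int.cast_inj, setWeight_eq, rootWeight, regularWeight, regularWeight]
  omega

lemma neg_setWeight_ne_rootWeight (S : Idx 3) (i j : Fin 9) :
    -(setWeight S : ℂ) ≠ rootWeight i j := by
  rw [Ne, neg_eq_iff_eq_neg, ← Int.cast_neg, rootWeight, neg_sub, ← rootWeight]
  exact setWeight_ne_rootWeight S j i

lemma setWeight_ne_neg_setWeight (S T : Idx 3) : (setWeight S : ℂ) ≠ -setWeight T := by
  rw [Ne, ← Int.cast_neg, Int.cast_inj, setWeight_eq, setWeight_eq]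
  omega

lemma setWeight_inj {S T : Idx 3} : (setWeight S : ℂ) = setWeight T ↔ S = T := by
  refine ⟨fun h => ?_, fun h => h ▸ rfl⟩
  rw [Int.cast_inj, setWeight_eq, setWeight_eq] at h
  have h2 : ∑ i ∈ S.1.map Fin.valEmbedding, 2 ^ i = ∑ i ∈ T.1.map Fin.valEmbedding, 2 ^ i := by
    simp only [Finset.sum_map, Fin.valEmbedding_apply]
    exact_mod_cast (by omega : ∑ i ∈ S.1, (2 : ℤ) ^ (i : ℕ) = ∑ i ∈ T.1, (2 : ℤ) ^ (i : ℕ))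
  exact Subtype.ext (Finset.map_injective _ (Finset.geomSum_injective le_rfl h2))

def regularElement : P := (Matrix.diagonal fun i => (regularWeight i : ℂ), 0, 0)

lemma regularElement_mem_g0 : regularElement ∈ g0 := by
  simp [g0, regularElement, Matrix.trace_diagonal, ← Int.cast_sum, sum_regularWeight]

lemma ebr_regularElement_fst (Y : P) (i j : Fin 9) :
    (ebr regularElement Y).1 i j = (rootWeight i j : ℂ) * Y.1 i j := by
  simp [regularElement, ebr_inl_left, rootWeight]
  ring

lemma ebr_regularElement_snd_fst (Y : P) (S : Idx 3) :
    (ebr regularElement Y).2.1 S = (setWeight S : ℂ) * Y.2.1 S := by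
  simp [regularElement, ebr_inl_left, der_diagonal, setWeight]

lemma ebr_regularElement_snd_snd (Y : P) (S : Idx 3) :
    (ebr regularElement Y).2.2 S = -(setWeight S : ℂ) * Y.2.2 S := by
  simp [regularElement, ebr_inl_left, der_diagonal, setWeight]

def adRegular : Module.End ℂ P where
  toFun := ebr regularElement
  map_add' Y Z := P.ext
    (fun i j => by simp [ebr_regularElement_fst, mul_add])
    (fun S => by simp [ebr_regularElement_snd_fst, mul_add])
    (fun S => by simp [ebr_regularElement_snd_snd, mul_add])
  map_smul' c Y := P.ext
    (fun i j => by simp [ebr_regularElement_fst]; ring)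
    (fun S => by simp [ebr_regularElement_snd_fst]; ring)
    (fun S => by simp [ebr_regularElement_snd_snd]; ring)

section WeightProjection

open scoped Classical

def weights : Finset ℂ :=
  (Finset.univ.image fun ij : Fin 9 × Fin 9 => (rootWeight ij.1 ij.2 : ℂ)) ∪
    (Finset.univ.image fun S : Idx 3 => (setWeight S : ℂ)) ∪
    Finset.univ.image fun S : Idx 3 => -(setWeight S : ℂ)

def weightProj (μ : ℂ) : Module.End ℂ P := aeval adRegular (Lagrange.basis weights id μ)

lemma weightProj_mem {I : Submodule ℂ P} (hI : ∀ R ∈ g0, ∀ S ∈ I, ebr R S ∈ I) (μ : ℂ) {Y : P}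
    (hY : Y ∈ I) : weightProj μ Y ∈ I :=
  adRegular.aeval_apply_mem (fun _ hx => hI _ regularElement_mem_g0 _ hx) _ _ hY

lemma weightProj_fst (μ : ℂ) (Y : P) (i j : Fin 9) :
    (weightProj μ Y).1 i j = if (rootWeight i j : ℂ) = μ then Y.1 i j else 0 :=
  adRegular.map_aeval_lagrangeBasis_apply (Matrix.entryLinearMap ℂ ℂ i j ∘ₗ LinearMap.fst ℂ _ _)
    (fun Y => ebr_regularElement_fst Y i j) (by simp [weights]) μ Y

lemma weightProj_snd_fst (μ : ℂ) (Y : P) (S : Idx 3) :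
    (weightProj μ Y).2.1 S = if (setWeight S : ℂ) = μ then Y.2.1 S else 0 :=
  adRegular.map_aeval_lagrangeBasis_apply
    (LinearMap.proj S ∘ₗ LinearMap.fst ℂ _ _ ∘ₗ LinearMap.snd ℂ _ _)
    (fun Y => ebr_regularElement_snd_fst Y S) (by simp [weights]) μ Y

lemma weightProj_snd_snd (μ : ℂ) (Y : P) (S : Idx 3) :
    (weightProj μ Y).2.2 S = if -(setWeight S : ℂ) = μ then Y.2.2 S else 0 :=
  adRegular.map_aeval_lagrangeBasis_apply
    (LinearMap.proj S ∘ₗ LinearMap.snd ℂ _ _ ∘ₗ LinearMap.snd ℂ _ _)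
    (fun Y => ebr_regularElement_snd_snd Y S) (by simp [weights]) μ Y

end WeightProjection

section Ideal

variable {I : Submodule ℂ P}

lemma single_mem_of_fst_ne_zero (hI : ∀ R ∈ g0, ∀ S ∈ I, ebr R S ∈ I) {Y : P} (hY : Y ∈ I)
    {i j : Fin 9} (hij : i ≠ j) (h : Y.1 i j ≠ 0) : ((Matrix.single i j 1, 0, 0) : P) ∈ I := by
  have hproj : weightProj (rootWeight i j) Y = Y.1 i j • ((Matrix.single i j 1, 0, 0) : P) := by
    refine P.ext (fun k l => ?_) (fun S => ?_) (fun S => ?_)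
    · by_cases hkl : k = i ∧ l = j
      · obtain ⟨rfl, rfl⟩ := hkl
        simp [weightProj_fst]
      · rw [weightProj_fst, if_neg (mt (rootWeight_eq_iff hij k l).mp hkl)]
        simp only [Prod.smul_fst, Matrix.smul_apply, Matrix.single_apply, smul_eq_mul]
        grind
    · rw [weightProj_snd_fst, if_neg (setWeight_ne_rootWeight S i j)]; simp
    · rw [weightProj_snd_snd, if_neg (neg_setWeight_ne_rootWeight S i j)]; simp
  rw [← Submodule.smul_mem_iff I h, ← hproj]
  exact weightProj_mem hI _ hY

lemma inr_fst_single_mem_of_ne_zero (hI : ∀ R ∈ g0, ∀ S ∈ I, ebr R S ∈ I) {Y : P} (hY : Y ∈ I)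
    {S : Idx 3} (h : Y.2.1 S ≠ 0) : ((0, Pi.single S 1, 0) : P) ∈ I := by
  have hproj : weightProj (setWeight S) Y = Y.2.1 S • ((0, Pi.single S 1, 0) : P) := by
    refine P.ext (fun k l => ?_) (fun T => ?_) (fun T => ?_)
    · rw [weightProj_fst, if_neg (setWeight_ne_rootWeight S k l).symm]; simp
    · by_cases hT : T = S
      · subst hT; simp [weightProj_snd_fst]
      · rw [weightProj_snd_fst, if_neg (mt setWeight_inj.mp hT)]; simp [hT]
    · rw [weightProj_snd_snd, if_neg (setWeight_ne_neg_setWeight S T).symm]; simp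
  rw [← Submodule.smul_mem_iff I h, ← hproj]
  exact weightProj_mem hI _ hY

lemma inr_snd_single_mem_of_ne_zero (hI : ∀ R ∈ g0, ∀ S ∈ I, ebr R S ∈ I) {Y : P} (hY : Y ∈ I)
    {S : Idx 3} (h : Y.2.2 S ≠ 0) : ((0, 0, Pi.single S 1) : P) ∈ I := by
  have hproj : weightProj (-setWeight S) Y = Y.2.2 S • ((0, 0, Pi.single S 1) : P) := by
    refine P.ext (fun k l => ?_) (fun T => ?_) (fun T => ?_)
    · rw [weightProj_fst, if_neg (neg_setWeight_ne_rootWeight S k l).symm]; simp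
    · rw [weightProj_snd_fst, if_neg (setWeight_ne_neg_setWeight T S)]; simp
    · by_cases hT : T = S
      · subst hT; simp [weightProj_snd_snd]
      · rw [weightProj_snd_snd, if_neg (mt (neg_inj.mp ·) (mt setWeight_inj.mp hT))]; simp [hT]
  rw [← Submodule.smul_mem_iff I h, ← hproj]
  exact weightProj_mem hI _ hY

lemma single_mem_of_diagonal_mem (hI : ∀ R ∈ g0, ∀ S ∈ I, ebr R S ∈ I) {d : Fin 9 → ℂ}
    (hd : ((Matrix.diagonal d, 0, 0) : P) ∈ I) {a b : Fin 9} (hab : d a ≠ d b) :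
    ((Matrix.single a b 1, 0, 0) : P) ∈ I := by
  have hcomm : Matrix.single a b 1 * Matrix.diagonal d - Matrix.diagonal d * Matrix.single a b 1 =
      (d b - d a) • Matrix.single a b (1 : ℂ) := by
    ext x y
    by_cases h : a = x ∧ b = y
    · obtain ⟨rfl, rfl⟩ := h; simp
    · simp [Matrix.single, h]
  have h := hI _ (single_mem_g0 fun h => hab (congrArg d h)) _ hd
  rw [ebr_inl_inl, hcomm] at h
  rw [← Submodule.smul_mem_iff I (sub_ne_zero.2 hab.symm)]
  simpa using h

lemma exists_single_mem_of_inl_mem (hle : I ≤ g0) (hI : ∀ R ∈ g0, ∀ S ∈ I, ebr R S ∈ I)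
    {M : Matrix (Fin 9) (Fin 9) ℂ} (hM : ((M, 0, 0) : P) ∈ I) (hM0 : M ≠ 0) :
    ∃ a b : Fin 9, ((Matrix.single a b 1, 0, 0) : P) ∈ I := by
  by_cases hoff : ∃ i j, i ≠ j ∧ M i j ≠ 0
  · obtain ⟨i, j, hij, h⟩ := hoff
    exact ⟨i, j, single_mem_of_fst_ne_zero hI hM hij h⟩
  push Not at hoff
  have hdiag : Matrix.diagonal M.diag = M := (Matrix.isDiag_iff_diagonal_diag M).mp hoff
  obtain ⟨a, b, hab⟩ : ∃ a b, M a a ≠ M b b := by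
    by_contra! hconst
    have htr : (9 : ℂ) * M 0 0 = 0 := by
      simpa [g0, Matrix.trace, hconst _ 0] using hle hM
    apply hM0
    rw [← hdiag]
    ext i j
    simp [Matrix.diagonal_apply, hconst i 0, (mul_eq_zero.mp htr).resolve_left (by norm_num)]
  exact ⟨a, b, single_mem_of_diagonal_mem hI (hdiag ▸ hM) hab⟩

lemma exists_single_mem (hle : I ≤ g0) (hI : ∀ R ∈ g0, ∀ S ∈ I, ebr R S ∈ I) {X : P}
    (hX : X ∈ I) (hX0 : X ≠ 0) :
    ∃ a b : Fin 9, ((Matrix.single a b 1, 0, 0) : P) ∈ I := by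
  by_cases hu : ∃ S, X.2.1 S ≠ 0
  · obtain ⟨S, hS⟩ := hu
    have h := hI (0, 0, Pi.single S 1) (inr_mem_g0 0 _) _ (inr_fst_single_mem_of_ne_zero hI hX hS)
    rw [ebr_inr_snd_inr_fst] at h
    exact exists_single_mem_of_inl_mem hle hI h (neg_ne_zero.2 (crossMat_single_self_ne_zero S))
  by_cases hv : ∃ S, X.2.2 S ≠ 0
  · obtain ⟨S, hS⟩ := hv
    have h := hI (0, Pi.single S 1, 0) (inr_mem_g0 _ 0) _ (inr_snd_single_mem_of_ne_zero hI hX hS)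
    rw [ebr_inr_fst_inr_snd] at h
    exact exists_single_mem_of_inl_mem hle hI h (crossMat_single_self_ne_zero S)
  push Not at hu hv
  have hX' : X = (X.1, 0, 0) := P.ext (fun _ _ => rfl) hu hv
  refine exists_single_mem_of_inl_mem hle hI (hX' ▸ hX) fun h => hX0 ?_
  rw [hX', h]
  rfl

lemma single_mem_of_single_mem_left (hI : ∀ R ∈ g0, ∀ S ∈ I, ebr R S ∈ I) {i j k : Fin 9}
    (h : ((Matrix.single i j 1, 0, 0) : P) ∈ I) (hki : k ≠ i) (hkj : k ≠ j) :
    ((Matrix.single k j 1, 0, 0) : P) ∈ I := by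
  have h' := hI _ (single_mem_g0 hki) _ h
  rwa [ebr_inl_inl, Matrix.single_mul_single_same, Matrix.single_mul_single_of_ne (h := hkj.symm),
    mul_one, sub_zero] at h'

lemma single_mem_of_single_mem_right (hI : ∀ R ∈ g0, ∀ S ∈ I, ebr R S ∈ I) {i j l : Fin 9}
    (h : ((Matrix.single i j 1, 0, 0) : P) ∈ I) (hli : l ≠ i) (hlj : l ≠ j) :
    ((Matrix.single i l 1, 0, 0) : P) ∈ I := by
  have h' := I.neg_mem (hI _ (single_mem_g0 hlj.symm) _ h)
  rwa [ebr_inl_inl, Matrix.single_mul_single_of_ne (h := hli), Matrix.single_mul_single_same,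
    mul_one, zero_sub, Prod.neg_mk, neg_neg, Prod.neg_mk, neg_zero] at h'

lemma single_mem_of_single_mem (hI : ∀ R ∈ g0, ∀ S ∈ I, ebr R S ∈ I) {i j : Fin 9}
    (h : ((Matrix.single i j 1, 0, 0) : P) ∈ I) {k l : Fin 9} (hkl : k ≠ l) :
    ((Matrix.single k l 1, 0, 0) : P) ∈ I := by
  have hrow : ∀ l, l ≠ i → ((Matrix.single i l 1, 0, 0) : P) ∈ I := fun l hli =>
    if hlj : l = j then hlj ▸ h else single_mem_of_single_mem_right hI h hli hlj
  have hoff : ∀ k l, k ≠ l → l ≠ i → ((Matrix.single k l 1, 0, 0) : P) ∈ I := fun k l hkl hli =>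
    if hki : k = i then hki ▸ hrow l hli else single_mem_of_single_mem_left hI (hrow l hli) hki hkl
  by_cases hli : l = i
  · have hthird : ∀ i k : Fin 9, ∃ m, m ≠ i ∧ m ≠ k := by decide
    obtain ⟨m, hmi, hmk⟩ := hthird i k
    exact single_mem_of_single_mem_right hI (hoff k m hmk.symm hmi) hkl.symm (hli ▸ hmi.symm)
  · exact hoff k l hkl hli

lemma single_sub_single_mem (hI : ∀ R ∈ g0, ∀ S ∈ I, ebr R S ∈ I)
    (hE : ∀ k l : Fin 9, k ≠ l → ((Matrix.single k l 1, 0, 0) : P) ∈ I) (i j : Fin 9) :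
    ((Matrix.single i i 1 - Matrix.single j j 1, 0, 0) : P) ∈ I := by
  by_cases hij : i = j
  · rw [hij, sub_self]
    exact I.zero_mem
  have h := hI _ (single_mem_g0 hij) _ (hE j i (Ne.symm hij))
  rwa [ebr_inl_inl, Matrix.single_mul_single_same, Matrix.single_mul_single_same, mul_one] at h

lemma inr_fst_single_mem (hI : ∀ R ∈ g0, ∀ S ∈ I, ebr R S ∈ I)
    (hE : ∀ k l : Fin 9, k ≠ l → ((Matrix.single k l 1, 0, 0) : P) ∈ I) (S : Idx 3) :
    ((0, Pi.single S 1, 0) : P) ∈ I := by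
  obtain ⟨a, b, ha, hb⟩ := exists_mem_notMem S
  have h := I.neg_mem
    (hI (0, Pi.single S 1, 0) (inr_mem_g0 _ 0) _ (single_sub_single_mem hI hE a b))
  rwa [ebr_inr_fst_inl, der_single_sub_single ha hb, Prod.neg_mk, neg_zero, Prod.neg_mk, neg_neg,
    neg_zero] at h

lemma inr_snd_single_mem (hI : ∀ R ∈ g0, ∀ S ∈ I, ebr R S ∈ I)
    (hE : ∀ k l : Fin 9, k ≠ l → ((Matrix.single k l 1, 0, 0) : P) ∈ I) (S : Idx 3) :
    ((0, 0, Pi.single S 1) : P) ∈ I := by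
  obtain ⟨a, b, ha, hb⟩ := exists_mem_notMem S
  have h := hI (0, 0, Pi.single S 1) (inr_mem_g0 0 _) _ (single_sub_single_mem hI hE a b)
  rwa [ebr_inr_snd_inl, Matrix.transpose_sub, Matrix.transpose_single, Matrix.transpose_single,
    der_single_sub_single ha hb] at h

lemma g0_le_of_single_mem (hI : ∀ R ∈ g0, ∀ S ∈ I, ebr R S ∈ I) {a b : Fin 9}
    (h : ((Matrix.single a b 1, 0, 0) : P) ∈ I) : g0 ≤ I := by
  have hE : ∀ k l : Fin 9, k ≠ l → ((Matrix.single k l 1, 0, 0) : P) ∈ I :=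
    fun k l hkl => single_mem_of_single_mem hI h hkl
  intro X hX
  have h₁ : ((X.1, 0, 0) : P) ∈ I :=
    Matrix.mem_of_trace_eq_zero (J := I.comap (LinearMap.inl ℂ _ _)) hE
      (single_sub_single_mem hI hE) (by simpa [g0] using hX)
  have h₂ : ((0, X.2.1, 0) : P) ∈ I :=
    Submodule.mem_of_forall_single_mem (J := I.comap (LinearMap.inr ℂ _ _ ∘ₗ LinearMap.inl ℂ _ _))
      (inr_fst_single_mem hI hE) X.2.1
  have h₃ : ((0, 0, X.2.2) : P) ∈ I :=
    Submodule.mem_of_forall_single_mem (J := I.comap (LinearMap.inr ℂ _ _ ∘ₗ LinearMap.inr ℂ _ _))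
      (inr_snd_single_mem hI hE) X.2.2
  simpa using add_mem (add_mem h₁ h₂) h₃

end Ideal

/-- The Lie algebra `g = sl(9,ℂ) ⊕ Λ³(ℂ⁹) ⊕ Λ³(ℂ⁹)` is simple:
every nonzero ideal of `g` equals `g`. -/
theorem stmt13 (I : Submodule ℂ P) (hle : I ≤ g0)
    (hideal : ∀ R ∈ g0, ∀ S ∈ I, ebr R S ∈ I) (hne : I ≠ ⊥) :
    I = g0 := by
  obtain ⟨X, hX, hX0⟩ := (Submodule.ne_bot_iff I).mp hne
  obtain ⟨a, b, hE⟩ := exists_single_mem hle hideal hX hX0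
  exact le_antisymm hle (g0_le_of_single_mem hideal hE)
end
end

section
/- Let A ∈ S(U(1)×U(8)) ⊂ SU(9) act on sl(9,ℂ) ⊕ Λ³(ℂ⁹) ⊕ Λ³(ℂ⁹) by φ(A)(D,u,v) = (ADA⁻¹, Au, (Aᵀ)⁻¹v). Then φ(A) = id if and only if A = ωᵏE for some cube root of unity ω (k = 0,1,2); i.e., the kernel of φ is {E, ωE, ω²E} ≅ ℤ/3. -/
open scoped BigOperators
open Matrix

noncomputable section

/-! A matrix fixing every traceless matrix under conjugation commutes with the off-diagonal
matrix units, hence is a scalar `c • 1`. A scalar acts on `Λᵏ` by `cᵏ` (all its `k × k` minors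
are diagonal), so the action on `Λ³` is trivial exactly when `c³ = 1`; the dual action on the
last summand is then by `c⁻³ = 1` as well. -/

namespace Matrix

variable {n R : Type*} [Fintype n] [DecidableEq n] [CommRing R]

theorem isUnit_det_of_forall_traceless_conj_eq [Nontrivial n] [Nontrivial R] {A : Matrix n n R}
    (h : ∀ D : Matrix n n R, D.trace = 0 → A * D * A⁻¹ = D) : IsUnit A.det := by
  by_contra hA
  obtain ⟨i, j, hij⟩ := exists_pair_ne n
  have hD := h (single i j 1) (trace_single_eq_of_ne i j 1 hij)
  rw [nonsing_inv_apply_not_isUnit A hA, mul_zero] at hD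
  simpa using congrFun₂ hD i j

theorem exists_eq_smul_one_of_forall_traceless_conj_eq [Nontrivial n] [Nontrivial R]
    {A : Matrix n n R} (h : ∀ D : Matrix n n R, D.trace = 0 → A * D * A⁻¹ = D) :
    ∃ c : R, A = c • 1 := by
  have hA := isUnit_det_of_forall_traceless_conj_eq h
  have hcomm : ∀ i j : n, i ≠ j → Commute (single i j 1) A := fun i j hij => by
    have hD := congrArg (· * A) (h (single i j 1) (trace_single_eq_of_ne i j 1 hij))
    have hAD : A * single i j 1 = single i j 1 * A := by
      simpa only [Matrix.mul_assoc, nonsing_inv_mul A hA, Matrix.mul_one] using hD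
    exact hAD.symm
  obtain ⟨c, hc⟩ := mem_range_scalar_of_commute_single hcomm
  exact ⟨c, by rw [← hc, scalar_apply, smul_one_eq_diagonal]⟩

theorem inv_smul_one {K : Type*} [Field K] {c : K} (hc : c ≠ 0) :
    (c • (1 : Matrix n n K))⁻¹ = c⁻¹ • 1 :=
  inv_eq_right_inv <| by
    rw [Matrix.smul_mul, Matrix.mul_smul, Matrix.one_mul, smul_smul, mul_inv_cancel₀ hc, one_smul]

end Matrix

theorem minor_smul_one {k : ℕ} (c : ℂ) (s t : Idx k) :
    minor (c • (1 : Matrix (Fin 9) (Fin 9) ℂ)) s t = if s = t then c ^ k else 0 := by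
  split_ifs with hst
  · subst hst
    have hsub : (of fun i j : Fin k => (c • (1 : Matrix (Fin 9) (Fin 9) ℂ))
        (s.1.orderIsoOfFin s.2 i) (s.1.orderIsoOfFin s.2 j)) = c • 1 := by
      ext i j
      simp [one_apply]
    rw [minor, hsub, det_smul, det_one, mul_one, Fintype.card_fin]
  · obtain ⟨x, hxs, hxt⟩ : ∃ x ∈ s.1, x ∉ t.1 := by
      by_contra! hc
      exact hst (Subtype.ext (Finset.eq_of_subset_of_card_le hc (by rw [s.2, t.2])))
    apply det_eq_zero_of_row_eq_zero ((s.1.orderIsoOfFin s.2).symm ⟨x, hxs⟩)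
    intro j
    have hne : x ≠ t.1.orderIsoOfFin t.2 j := fun hx => hxt (hx ▸ (t.1.orderIsoOfFin t.2 j).2)
    rw [of_apply, OrderIso.apply_symm_apply, Matrix.smul_apply, one_apply_ne hne, smul_zero]

theorem act_smul_one {k : ℕ} (c : ℂ) (u : Lam k) :
    act (c • (1 : Matrix (Fin 9) (Fin 9) ℂ)) u = c ^ k • u := by
  funext s
  simp [act, minor_smul_one, ite_mul]

theorem act_smul_one_eq_self_iff {k : ℕ} (hk : k ≤ 9) (c : ℂ) :
    (∀ u : Lam k, act (c • (1 : Matrix (Fin 9) (Fin 9) ℂ)) u = u) ↔ c ^ k = 1 := by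
  simp only [act_smul_one]
  refine ⟨fun h => ?_, fun h u => by rw [h, one_smul]⟩
  obtain ⟨s, -, hs⟩ := Finset.exists_subset_card_eq (s := (Finset.univ : Finset (Fin 9)))
    (by simpa using hk)
  simpa using congrFun (h (Pi.single ⟨s, hs⟩ 1)) ⟨s, hs⟩

theorem IsPrimitiveRoot.exists_fin_pow_eq_iff {R : Type*} [CommRing R] [IsDomain R]
    {ζ : R} {n : ℕ} [NeZero n] (hζ : IsPrimitiveRoot ζ n) (x : R) :
    (∃ k : Fin n, x = ζ ^ (k : ℕ)) ↔ x ^ n = 1 := by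
  refine ⟨?_, fun hx => ?_⟩
  · rintro ⟨k, rfl⟩
    rw [← pow_mul, mul_comm, pow_mul, hζ.pow_eq_one, one_pow]
  · obtain ⟨k, hk, rfl⟩ := hζ.eq_pow_of_pow_eq_one hx
    exact ⟨⟨k, hk⟩, rfl⟩

theorem stmt15_general (A : Matrix (Fin 9) (Fin 9) ℂ) :
    ((∀ D : Matrix (Fin 9) (Fin 9) ℂ, D.trace = 0 → A * D * A⁻¹ = D) ∧
      (∀ u : Lam 3, act A u = u) ∧ (∀ v : Lam 3, act (Aᵀ)⁻¹ v = v))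
    ↔ ∃ k : Fin 3, A = Complex.exp (2 * (Real.pi : ℂ) * Complex.I / 3) ^ (k : ℕ) • 1 := by
  have hω : IsPrimitiveRoot (Complex.exp (2 * (Real.pi : ℂ) * Complex.I / 3)) 3 := by
    exact_mod_cast Complex.isPrimitiveRoot_exp 3 (by norm_num)
  constructor
  · rintro ⟨hconj, hact, -⟩
    obtain ⟨c, rfl⟩ := exists_eq_smul_one_of_forall_traceless_conj_eq hconj
    have hc : c ^ 3 = 1 := (act_smul_one_eq_self_iff (by norm_num) c).1 hact
    obtain ⟨k, hk⟩ := (hω.exists_fin_pow_eq_iff c).2 hc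
    exact ⟨k, by rw [hk]⟩
  · rintro ⟨k, rfl⟩
    set c := Complex.exp (2 * (Real.pi : ℂ) * Complex.I / 3) ^ (k : ℕ)
    have hc : c ^ 3 = 1 := (hω.exists_fin_pow_eq_iff c).1 ⟨k, rfl⟩
    have hc0 : c ≠ 0 := pow_ne_zero _ (Complex.exp_ne_zero _)
    refine ⟨fun D _ => ?_, (act_smul_one_eq_self_iff (by norm_num) c).2 hc, ?_⟩
    · rw [inv_smul_one hc0, Matrix.smul_mul, Matrix.one_mul, Matrix.mul_smul, Matrix.mul_one,
        smul_smul, inv_mul_cancel₀ hc0, one_smul]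
    · rw [transpose_smul, transpose_one, inv_smul_one hc0, act_smul_one_eq_self_iff (by norm_num),
        inv_pow, hc, inv_one]

/-- Let `A ∈ S(U(1)×U(8)) ⊂ SU(9)` act on `sl(9,ℂ) ⊕ Λ³(ℂ⁹) ⊕ Λ³(ℂ⁹)` by
`φ(A)(D,u,v) = (ADA⁻¹, Au, (Aᵀ)⁻¹v)`.  Then `φ(A) = id` iff `A = ωᵏ·1` for a cube
root of unity `ω = e^{2πi/3}`; i.e. the kernel of `φ` is `{1, ω·1, ω²·1} ≅ ℤ/3`. -/
theorem stmt15 (A : Matrix (Fin 9) (Fin 9) ℂ)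
    (hunitary : Aᴴ * A = 1)
    (hblock : ∀ j : Fin 9, j ≠ 0 → A 0 j = 0 ∧ A j 0 = 0)
    (hdet : A.det = 1) :
    ((∀ D : Matrix (Fin 9) (Fin 9) ℂ, D.trace = 0 → A * D * A⁻¹ = D) ∧
      (∀ u : Lam 3, act A u = u) ∧ (∀ v : Lam 3, act (Aᵀ)⁻¹ v = v))
    ↔ ∃ k : Fin 3, A = Complex.exp (2 * (Real.pi : ℂ) * Complex.I / 3) ^ (k : ℕ) • 1 :=
  stmt15_general A

end
end
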